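/- arXiv:1204.1580 — 3 statements merged into one kernel-verified Lean document; each statement's English description precedes it below -/
import Mathlib

section
/- Let Ψ be an M×N matrix with integer entries all bounded in absolute value by P, and let 𝒦 be a set of K column indices such that the columns Ψ_𝒦 are linearly independent. Then λ_min(Ψ_𝒦* Ψ_𝒦) ≥ 1 / (K·M·P²)^{K−1}. -/
/-!
The Gram matrix `G = Ψ_𝒦ᵀ Ψ_𝒦` is positive definite with integer entries, so `det G` is a
positive integer and hence `1 ≤ det G`. Its eigenvalues are nonnegative, so each is at most
`tr G ≤ K M P²`, and therefore `1 ≤ det G = λ_i ∏_{j ≠ i} λ_j ≤ λ_i (K M P²)^(K-1)`.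
-/

open scoped Matrix ComplexOrder

theorem Finset.prod_le_mul_sum_pow {ι R : Type*} [Fintype ι] [DecidableEq ι] [CommSemiring R]
    [PartialOrder R] [IsOrderedRing R] {f : ι → R} (hf : ∀ j, 0 ≤ f j) (i : ι) :
    ∏ j, f j ≤ f i * (∑ j, f j) ^ (Fintype.card ι - 1) := by
  rw [← Finset.mul_prod_erase _ _ (Finset.mem_univ i), ← Finset.card_univ,
    ← Finset.card_erase_of_mem (Finset.mem_univ i), ← Finset.prod_const]
  exact mul_le_mul_of_nonneg_left (Finset.prod_le_prod (fun j _ => hf j)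
    fun j _ => Finset.single_le_sum (fun k _ => hf k) (Finset.mem_univ j)) (hf i)

namespace Matrix

variable {m n : Type*} [Fintype m] [Fintype n]

theorem trace_conjTranspose_mul_self_le {A : Matrix m n ℝ} {c : ℝ} (hA : ∀ i j, |A i j| ≤ c) :
    (Aᴴ * A).trace ≤ Fintype.card n * Fintype.card m * c ^ 2 := by
  calc (Aᴴ * A).trace = ∑ j, ∑ i, A i j ^ 2 := by
        simp [trace, mul_apply, sq]
    _ ≤ ∑ _j : n, ∑ _i : m, c ^ 2 :=
        Finset.sum_le_sum fun j _ => Finset.sum_le_sum fun i _ =>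
          sq_le_sq' (abs_le.mp (hA i j)).1 (abs_le.mp (hA i j)).2
    _ = Fintype.card n * Fintype.card m * c ^ 2 := by
        simp [mul_assoc]

variable [DecidableEq n]

theorem one_le_det_map_intCast {R : Type*} [CommRing R] [LinearOrder R] [IsStrictOrderedRing R]
    (B : Matrix n n ℤ) (h : 0 < (B.map (Int.cast : ℤ → R)).det) :
    1 ≤ (B.map (Int.cast : ℤ → R)).det := by
  have hdet : (B.map (Int.cast : ℤ → R)).det = B.det := by
    simpa using ((Int.castRingHom R).map_det B).symm
  rw [hdet] at h ⊢
  exact_mod_cast (Int.cast_pos.mp h : 0 < B.det)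

theorem PosSemidef.det_le_eigenvalues_mul_trace_pow {𝕜 : Type*} [RCLike 𝕜] {A : Matrix n n 𝕜}
    (hA : A.PosSemidef) (i : n) :
    A.det ≤ (hA.1.eigenvalues i : 𝕜) * A.trace ^ (Fintype.card n - 1) := by
  rw [hA.1.det_eq_prod_eigenvalues, hA.1.trace_eq_sum_eigenvalues]
  exact_mod_cast Finset.prod_le_mul_sum_pow hA.eigenvalues_nonneg i

theorem PosSemidef.one_div_pow_le_eigenvalues {A : Matrix n n ℝ} (hA : A.PosSemidef)
    (hdet : 1 ≤ A.det) {T : ℝ} (htr : A.trace ≤ T) (i : n) :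
    1 / T ^ (Fintype.card n - 1) ≤ hA.1.eigenvalues i := by
  have hμ := hA.eigenvalues_nonneg i
  have key : 1 ≤ hA.1.eigenvalues i * T ^ (Fintype.card n - 1) := calc
    1 ≤ A.det := hdet
    _ ≤ hA.1.eigenvalues i * A.trace ^ (Fintype.card n - 1) :=
      hA.det_le_eigenvalues_mul_trace_pow i
    _ ≤ hA.1.eigenvalues i * T ^ (Fintype.card n - 1) := by
      have := hA.trace_nonneg
      gcongr
  have hT : 0 < T ^ (Fintype.card n - 1) := pos_of_mul_pos_right (one_pos.trans_le key) hμ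
  rwa [div_le_iff₀ hT]

end Matrix

/-- If `Ψ` is an `M × N` integer matrix with entries bounded in absolute value by `P`, and the
`K` columns indexed by `𝒦` are linearly independent, then every eigenvalue (in particular the
smallest) of the Gram matrix `Ψ_𝒦* Ψ_𝒦` is at least `1 / (K·M·P²)^(K-1)`. -/
theorem stmt_6 {M N : ℕ} (K : ℕ) (Ψ : Matrix (Fin M) (Fin N) ℤ) (P : ℤ)
    (hP : ∀ i j, |Ψ i j| ≤ P) (𝒦 : Finset (Fin N)) (h𝒦 : 𝒦.card = K)
    (hind : LinearIndependent ℝ (fun j : 𝒦 => fun i : Fin M => (Ψ i j : ℝ))) :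
    ∀ i : 𝒦,
      1 / ((K : ℝ) * M * (P : ℝ) ^ 2) ^ (K - 1) ≤
        (Matrix.isHermitian_conjTranspose_mul_self
          (fun i : Fin M => fun j : 𝒦 => (Ψ i j : ℝ))).eigenvalues i := by
  set Ψ𝒦 : Matrix (Fin M) 𝒦 ℤ := Ψ.submatrix id (↑)
  set A : Matrix (Fin M) 𝒦 ℝ := Ψ𝒦.map (Int.cast : ℤ → ℝ)
  have hgram : Aᴴ * A = (Ψ𝒦ᵀ * Ψ𝒦).map (Int.cast : ℤ → ℝ) := by
    ext j k
    simp [A, Matrix.mul_apply]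
  have hPD : (Aᴴ * A).PosDef := .conjTranspose_mul_self A (Matrix.mulVec_injective_iff.mpr hind)
  have hdet : 1 ≤ (Aᴴ * A).det := by
    rw [hgram] at hPD ⊢
    exact Matrix.one_le_det_map_intCast _ hPD.det_pos
  have htr : (Aᴴ * A).trace ≤ K * M * (P : ℝ) ^ 2 := by
    simpa [h𝒦] using Matrix.trace_conjTranspose_mul_self_le (A := A) fun i j => by
      simpa [A, Ψ𝒦] using (Int.cast_le (R := ℝ)).mpr (hP i j)
  intro i
  have := hPD.posSemidef.one_div_pow_le_eigenvalues hdet htr i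
  rwa [Fintype.card_coe, h𝒦] at this
end

section
/- Let Ψ be an M×N integer matrix with K ≤ M ≤ N and entries bounded in absolute value by P, and set Φ = (1/C)Ψ where C = 2^{⌈log₂(√(MN)·P)⌉}. If every K columns of Ψ are linearly independent and δ = 1 − 1/(C²·(KMP²)^{K−1}), then Φ satisfies the (K,δ)-restricted isometry property. -/
/-!
The upper inequality is the entrywise estimate `‖Ψx‖² ≤ MNP²‖x‖² ≤ C²‖x‖²`. For the lower one,
enlarge the support of `x` to a set of `K` columns and let `B` be the corresponding `M × K`
submatrix. Its Gram matrix `G = BᵀB` has integer entries of size at most `MP²` and is nonsingular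
because the columns are independent, so `det G` is a positive integer, hence at least `1`. The
adjugate then inverts `G` up to the factor `det G ≥ 1` with entries at most `(K-1)!(MP²)^(K-1)`,
which yields `‖y‖² ≤ K!(MP²)^(K-1)‖By‖² ≤ (KMP²)^(K-1)‖By‖²`, i.e. a lower eigenvalue bound for `G`.
-/

open Finset in
/-- The `(K, δ)`-restricted isometry property for an `M × N` real matrix. -/
def RIP {M N : ℕ} (Φ : Matrix (Fin M) (Fin N) ℝ) (K : ℕ) (δ : ℝ) : Prop :=
  ∀ x : Fin N → ℝ, (Finset.univ.filter fun i => x i ≠ 0).card ≤ K →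
    (1 - δ) * (∑ j, x j ^ 2) ≤ (∑ i, (Φ.mulVec x i) ^ 2) ∧
    (∑ i, (Φ.mulVec x i) ^ 2) ≤ (1 + δ) * (∑ j, x j ^ 2)

open Finset Matrix Nat

theorem Nat.factorial_succ_le_pow (k : ℕ) : (k + 1)! ≤ (k + 1) ^ k := by
  calc (k + 1)! = (1 : ℕ)! * (k + 1).descFactorial k := by
        simpa using (Nat.factorial_mul_descFactorial k.le_succ).symm
    _ ≤ (k + 1) ^ k := by simpa using Nat.descFactorial_le_pow (k + 1) k

theorem Real.le_two_zpow_ceil_logb {c : ℝ} (hc : 0 < c) : c ≤ 2 ^ ⌈Real.logb 2 c⌉ := by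
  calc c = 2 ^ Real.logb 2 c := (Real.rpow_logb (by norm_num) (by norm_num) hc).symm
    _ ≤ 2 ^ (⌈Real.logb 2 c⌉ : ℝ) := Real.rpow_le_rpow_of_exponent_le (by norm_num) (Int.le_ceil _)
    _ = 2 ^ ⌈Real.logb 2 c⌉ := Real.rpow_intCast 2 _

variable {m n : Type*} [Fintype m]

theorem Matrix.sum_sq_mulVec_le_of_abs_le [Fintype n] (A : Matrix m n ℝ) {P : ℝ}
    (hA : ∀ i j, |A i j| ≤ P) (x : n → ℝ) :
    ∑ i, (A *ᵥ x) i ^ 2 ≤ Fintype.card m * Fintype.card n * P ^ 2 * ∑ j, x j ^ 2 := by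
  have hrow : ∀ i, (A *ᵥ x) i ^ 2 ≤ Fintype.card n * P ^ 2 * ∑ j, x j ^ 2 := fun i => by
    calc (A *ᵥ x) i ^ 2 ≤ (∑ j, A i j ^ 2) * ∑ j, x j ^ 2 :=
          Finset.sum_mul_sq_le_sq_mul_sq _ _ _
      _ ≤ (∑ _j : n, P ^ 2) * ∑ j, x j ^ 2 := by
          refine mul_le_mul_of_nonneg_right (Finset.sum_le_sum fun j _ => ?_) (by positivity)
          exact sq_le_sq' (abs_le.mp (hA i j)).1 (abs_le.mp (hA i j)).2
      _ = _ := by simp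
  calc ∑ i, (A *ᵥ x) i ^ 2 ≤ ∑ _i : m, Fintype.card n * P ^ 2 * ∑ j, x j ^ 2 :=
        Finset.sum_le_sum fun i _ => hrow i
    _ = _ := by simp [mul_assoc]

theorem Matrix.abs_transpose_mul_self_apply_le (A : Matrix m n ℝ) {P : ℝ}
    (hA : ∀ i j, |A i j| ≤ P) (a b : n) : |(Aᵀ * A) a b| ≤ Fintype.card m * P ^ 2 := by
  calc |(Aᵀ * A) a b| ≤ ∑ i, |A i a| * |A i b| := by
        simpa only [mul_apply, transpose_apply, abs_mul] using
          Finset.abs_sum_le_sum_abs (fun i => A i a * A i b) univ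
    _ ≤ ∑ _i : m, P * P := by
        gcongr with i
        · exact (abs_nonneg _).trans (hA i a)
        · exact hA i a
        · exact hA i b
    _ = _ := by simp [sq]

theorem Matrix.dotProduct_mulVec_le_of_abs_le [Fintype n] (H : Matrix n n ℝ) {R : ℝ}
    (hH : ∀ a b, |H a b| ≤ R) (y : n → ℝ) : y ⬝ᵥ (H *ᵥ y) ≤ Fintype.card n * R * ∑ a, y a ^ 2 := by
  rcases isEmpty_or_nonempty n with hn | ⟨⟨a₀⟩⟩
  · simp
  have hR : 0 ≤ R := (abs_nonneg _).trans (hH a₀ a₀)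
  calc y ⬝ᵥ (H *ᵥ y) ≤ ∑ a, ∑ b, R * (|y a| * |y b|) := by
        simp only [dotProduct, mulVec, Finset.mul_sum]
        refine (Finset.sum_le_sum fun a _ => Finset.sum_le_sum fun b _ => ?_)
        calc y a * (H a b * y b) ≤ |y a * (H a b * y b)| := le_abs_self _
          _ ≤ R * (|y a| * |y b|) := by
            rw [abs_mul, abs_mul, mul_left_comm]
            gcongr
            exact hH a b
    _ = R * (∑ a, |y a|) ^ 2 := by
        rw [sq, Finset.sum_mul_sum, Finset.mul_sum]
        simp only [Finset.mul_sum]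
    _ ≤ R * (Fintype.card n * ∑ a, y a ^ 2) := by
        gcongr
        simpa using sq_sum_le_card_mul_sum_sq (s := Finset.univ) (f := fun a => |y a|)
    _ = _ := by ring

theorem Matrix.abs_adjugate_apply_le {k : ℕ} (G : Matrix (Fin (k + 1)) (Fin (k + 1)) ℝ) {Q : ℝ}
    (hG : ∀ a b, |G a b| ≤ Q) (a b : Fin (k + 1)) : |G.adjugate a b| ≤ k ! * Q ^ k := by
  rw [adjugate_fin_succ_eq_det_submatrix, abs_mul, abs_pow, abs_neg, abs_one, one_pow, one_mul]
  simpa [nsmul_eq_mul] using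
    det_le (A := G.submatrix b.succAbove a.succAbove) (abv := AbsoluteValue.abs) fun _ _ => hG _ _

theorem Matrix.sum_sq_le_of_one_le_det_transpose_mul_self {k : ℕ} (A : Matrix m (Fin (k + 1)) ℝ)
    (hdet : 1 ≤ (Aᵀ * A).det) {Q : ℝ} (hQ : ∀ a b, |(Aᵀ * A) a b| ≤ Q) (y : Fin (k + 1) → ℝ) :
    ∑ a, y a ^ 2 ≤ (k + 1)! * Q ^ k * ∑ i, (A *ᵥ y) i ^ 2 := by
  set G := Aᵀ * A
  set d := G.det
  set R : ℝ := (k + 1)! * Q ^ k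
  set T := ∑ a, y a ^ 2
  set S := ∑ i, (A *ᵥ y) i ^ 2
  set v := G.adjugate *ᵥ y
  have gram (u w : Fin (k + 1) → ℝ) : (A *ᵥ u) ⬝ᵥ (A *ᵥ w) = u ⬝ᵥ (G *ᵥ w) := by
    rw [← mulVec_mulVec, dotProduct_mulVec u, vecMul_transpose]
  have hGv : G *ᵥ v = d • y := by
    rw [mulVec_mulVec, mul_adjugate, smul_mulVec, one_mulVec]
  have hyv : y ⬝ᵥ v ≤ R * T := by
    have := G.adjugate.dotProduct_mulVec_le_of_abs_le (G.abs_adjugate_apply_le hQ) y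
    convert this using 1
    simp only [R, Fintype.card_fin, Nat.factorial_succ]
    push_cast
    ring
  have hcross : ∑ i, (A *ᵥ y) i * (A *ᵥ v) i = d * T := by
    rw [← dotProduct, gram, hGv, dotProduct_smul, smul_eq_mul]
    simp [T, dotProduct, sq]
  have hAv : ∑ i, (A *ᵥ v) i ^ 2 ≤ d * (R * T) := by
    have : ∑ i, (A *ᵥ v) i ^ 2 = d * (y ⬝ᵥ v) := by
      rw [← dotProduct_comm, ← smul_eq_mul, ← dotProduct_smul, ← hGv, ← gram]
      simp [dotProduct, sq]
    rw [this]
    exact mul_le_mul_of_nonneg_left hyv (zero_le_one.trans hdet)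
  have hcs : (d * T) ^ 2 ≤ S * (d * (R * T)) := by
    rw [← hcross]
    exact (Finset.sum_mul_sq_le_sq_mul_sq _ _ _).trans
      (mul_le_mul_of_nonneg_left hAv (by positivity))
  have hR : 0 ≤ R := by
    have : 0 ≤ Q := (abs_nonneg _).trans (hQ 0 0)
    positivity
  have hT : 0 ≤ T := by positivity
  rcases hT.eq_or_lt with hT0 | hTpos
  · rw [← hT0]
    positivity
  · have hdT : 0 < d * T := mul_pos (zero_lt_one.trans_le hdet) hTpos
    have : d * T ≤ R * S := le_of_mul_le_mul_right (by nlinarith) hdT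
    nlinarith

theorem Matrix.one_le_det_transpose_mul_self_of_injective [DecidableEq n] [Fintype n]
    (B : Matrix m n ℤ) (hB : Function.Injective (B.map ((↑) : ℤ → ℝ)).mulVec) :
    1 ≤ ((B.map ((↑) : ℤ → ℝ))ᵀ * B.map ((↑) : ℤ → ℝ)).det := by
  set A := B.map ((↑) : ℤ → ℝ)
  have hcast : (Aᵀ * A).det = ((Bᵀ * B).det : ℝ) := by
    rw [Int.cast_det]
    congr 1
    ext a b
    simp [A, mul_apply]
  have hinj : Function.Injective (Aᵀ * A).mulVec := fun u w h => hB <| by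
    rw [← sub_eq_zero, ← mulVec_sub] at h ⊢
    rwa [← conjTranspose_eq_transpose_of_trivial, conjTranspose_mul_self_mulVec_eq_zero] at h
  have hne : (Aᵀ * A).det ≠ 0 :=
    ((isUnit_iff_isUnit_det _).mp (mulVec_injective_iff_isUnit.mp hinj)).ne_zero
  have hnonneg : 0 ≤ (Aᵀ * A).det := by
    simpa [conjTranspose_eq_transpose_of_trivial] using
      (posSemidef_conjTranspose_mul_self A).det_nonneg
  rw [hcast] at hne hnonneg ⊢
  have : 0 < (Bᵀ * B).det := by exact_mod_cast hnonneg.lt_of_ne' hne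
  exact_mod_cast this

theorem Matrix.sum_sq_le_of_linearIndependent [Fintype n] (Ψ : Matrix m n ℤ) {P : ℤ}
    (hP : ∀ i j, |Ψ i j| ≤ P) {𝒦 : Finset n} {k : ℕ} (h𝒦 : #𝒦 = k + 1)
    (hind : LinearIndependent ℝ (fun j : 𝒦 => fun i => (Ψ i j : ℝ)))
    (x : n → ℝ) (hx : ∀ j ∉ 𝒦, x j = 0) :
    ∑ j, x j ^ 2 ≤
      ((k + 1) * Fintype.card m * P ^ 2 : ℝ) ^ k * ∑ i, (Ψ.map ((↑) : ℤ → ℝ) *ᵥ x) i ^ 2 := by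
  set e : Fin (k + 1) ≃ 𝒦 := (𝒦.equivFin.trans (finCongr h𝒦)).symm
  set f : Fin (k + 1) → n := fun a => e a
  have hf : Function.Injective f := Subtype.val_injective.comp e.injective
  have hxf : ∀ j ∉ Set.range f, x j = 0 := fun j hj => hx j fun h𝒦j =>
    hj ⟨e.symm ⟨j, h𝒦j⟩, by simp [f]⟩
  set B := Ψ.submatrix id f
  have hnorm : ∑ j, x j ^ 2 = ∑ a, x (f a) ^ 2 :=
    (Fintype.sum_of_injective f hf _ _ (fun j hj => by simp [hxf j hj]) fun _ => rfl).symm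
  have hmulVec : Ψ.map ((↑) : ℤ → ℝ) *ᵥ x = B.map ((↑) : ℤ → ℝ) *ᵥ (x ∘ f) := funext fun i =>
    (Fintype.sum_of_injective f hf _ _ (fun j hj => by simp [hxf j hj]) fun _ => rfl).symm
  have hinj : Function.Injective (B.map ((↑) : ℤ → ℝ)).mulVec :=
    mulVec_injective_iff.mpr (hind.comp e e.injective)
  have hPB : ∀ i a, |B.map ((↑) : ℤ → ℝ) i a| ≤ P := fun i a => by
    simpa [B, ← Int.cast_abs] using hP i (f a)
  calc ∑ j, x j ^ 2
      ≤ (k + 1)! * (Fintype.card m * P ^ 2 : ℝ) ^ k * ∑ i, (Ψ.map ((↑) : ℤ → ℝ) *ᵥ x) i ^ 2 := by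
        rw [hnorm, hmulVec]
        exact sum_sq_le_of_one_le_det_transpose_mul_self _
          (one_le_det_transpose_mul_self_of_injective B hinj)
          (abs_transpose_mul_self_apply_le _ hPB) _
    _ ≤ ((k + 1) * Fintype.card m * P ^ 2 : ℝ) ^ k * ∑ i, (Ψ.map ((↑) : ℤ → ℝ) *ᵥ x) i ^ 2 := by
        rw [mul_assoc _ (Fintype.card m : ℝ), mul_pow _ (_ * _)]
        gcongr
        exact_mod_cast factorial_succ_le_pow k

theorem RIP.of_sparse_bounds {M N K : ℕ} (A : Matrix (Fin M) (Fin N) ℝ) {C L : ℝ} (hC : 0 < C)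
    (hCL : 1 ≤ C ^ 2 * L)
    (hlower : ∀ x : Fin N → ℝ, #{j | x j ≠ 0} ≤ K → ∑ j, x j ^ 2 ≤ L * ∑ i, (A *ᵥ x) i ^ 2)
    (hupper : ∀ x : Fin N → ℝ, #{j | x j ≠ 0} ≤ K →
      ∑ i, (A *ᵥ x) i ^ 2 ≤ C ^ 2 * ∑ j, x j ^ 2) :
    RIP (fun i j => A i j / C) K (1 - 1 / (C ^ 2 * L)) := by
  intro x hx
  have hscale : ∑ i, ((fun i j => A i j / C) *ᵥ x) i ^ 2 = (∑ i, (A *ᵥ x) i ^ 2) / C ^ 2 := by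
    simp only [mulVec, dotProduct, div_mul_eq_mul_div, ← Finset.sum_div, div_pow]
  have hL : 0 < L := pos_of_mul_pos_right (zero_lt_one.trans_le hCL) (by positivity)
  rw [hscale, sub_sub_cancel, div_mul_eq_mul_div, one_mul, div_le_div_iff₀ (by positivity)
    (by positivity), div_le_iff₀ (by positivity)]
  constructor
  · nlinarith [hlower x hx]
  · have hδ : 1 / (C ^ 2 * L) ≤ 1 := div_le_one_of_le₀ hCL (by positivity)
    have hx2 : 0 ≤ ∑ j, x j ^ 2 := by positivity
    nlinarith [hupper x hx, mul_nonneg (sub_nonneg.2 hδ) (mul_nonneg hx2 (sq_nonneg C))]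

/-- If `Ψ` is an `M × N` integer matrix with `K ≤ M ≤ N`, entries bounded by `P ≥ 1`, every
`K` columns of `Ψ` are linearly independent, `C = 2^⌈log₂(√(MN)·P)⌉`, and
`δ = 1 - 1/(C²·(K·M·P²)^(K-1))`, then `Φ = (1/C)Ψ` satisfies the `(K,δ)`-RIP. -/
theorem stmt_9 {M N : ℕ} (K : ℕ) (hKM : K ≤ M) (hMN : M ≤ N) (hK : 0 < K)
    (Ψ : Matrix (Fin M) (Fin N) ℤ) (P : ℤ) (hP1 : 1 ≤ P) (hP : ∀ i j, |Ψ i j| ≤ P)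
    (hind : ∀ 𝒦 : Finset (Fin N), 𝒦.card = K →
      LinearIndependent ℝ (fun j : 𝒦 => fun i : Fin M => (Ψ i j : ℝ)))
    (C : ℝ) (hC : C = 2 ^ (⌈Real.logb 2 (Real.sqrt (M * N) * P)⌉ : ℤ))
    (δ : ℝ) (hδ : δ = 1 - 1 / (C ^ 2 * ((K : ℝ) * M * (P : ℝ) ^ 2) ^ (K - 1))) :
    RIP (fun i j => (Ψ i j : ℝ) / C) K δ := by
  obtain ⟨k, rfl⟩ := Nat.exists_eq_add_one_of_ne_zero hK.ne'
  have hM : (1 : ℝ) ≤ M := by exact_mod_cast hK.trans_le hKM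
  have hN : (1 : ℝ) ≤ N := by exact_mod_cast (hK.trans_le hKM).trans_le hMN
  have hP1' : (1 : ℝ) ≤ P := by exact_mod_cast hP1
  have hC2 : (M : ℝ) * N * P ^ 2 ≤ C ^ 2 := by
    have hc : √(M * N) * P ≤ C := hC ▸ Real.le_two_zpow_ceil_logb (by positivity)
    calc (M : ℝ) * N * P ^ 2 = (√(M * N) * P) ^ 2 := by rw [mul_pow, Real.sq_sqrt (by positivity)]
      _ ≤ C ^ 2 := pow_le_pow_left₀ (by positivity) hc 2
  have hP2 : (1 : ℝ) ≤ P ^ 2 := one_le_pow₀ hP1'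
  have hL : 1 ≤ (((k + 1 : ℕ) : ℝ) * M * P ^ 2) ^ k :=
    one_le_pow₀ (one_le_mul_of_one_le_of_one_le
      (one_le_mul_of_one_le_of_one_le (by simp) hM) hP2)
  rw [hδ, Nat.add_sub_cancel]
  refine RIP.of_sparse_bounds (Ψ.map (↑)) (by rw [hC]; positivity) ?_ (fun x hx => ?_)
    (fun x _ => ?_)
  · exact one_le_mul_of_one_le_of_one_le
      ((one_le_mul_of_one_le_of_one_le (one_le_mul_of_one_le_of_one_le hM hN) hP2).trans hC2) hL
  · obtain ⟨𝒦, hsupp, h𝒦⟩ := Finset.exists_superset_card_eq hx (by simpa using hKM.trans hMN)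
    simpa using Ψ.sum_sq_le_of_linearIndependent hP h𝒦 (hind 𝒦 h𝒦) x fun j hj =>
      by_contra fun h => hj (hsupp (by simpa using h))
  · calc ∑ i, (Ψ.map (↑) *ᵥ x) i ^ 2 ≤ M * N * P ^ 2 * ∑ j, x j ^ 2 := by
          simpa using (Ψ.map ((↑) : ℤ → ℝ)).sum_sq_mulVec_le_of_abs_le (fun i j => by
            simpa [← Int.cast_abs] using hP i j) x
      _ ≤ C ^ 2 * ∑ j, x j ^ 2 := by gcongr
end

section
/- Let A be a K×K real symmetric positive definite matrix with integer entries bounded in absolute value by B. Then λ_min(A) ≥ 1/(K·B)^{K−1}. -/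
/-!
An integer matrix that is positive definite over `ℝ` has a positive integer determinant, so the
product of its eigenvalues is at least `1`. Each eigenvalue is at most the trace, hence at most
`K·B`, so `1 ≤ det A ≤ λ · (K·B)^(K-1)` for every eigenvalue `λ`.
-/

open Finset

theorem one_div_pow_card_sub_one_le_of_one_le_prod {ι α : Type*} [Fintype ι] [Field α]
    [LinearOrder α] [IsStrictOrderedRing α] {f : ι → α} {C : α}
    (hf0 : ∀ j, 0 ≤ f j) (hfC : ∀ j, f j ≤ C) (hprod : 1 ≤ ∏ j, f j) (i : ι) :
    1 / C ^ (Fintype.card ι - 1) ≤ f i := by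
  classical
  have hrest : ∏ j ∈ univ.erase i, f j ≤ C ^ (Fintype.card ι - 1) :=
    calc ∏ j ∈ univ.erase i, f j ≤ ∏ _j ∈ univ.erase i, C :=
          prod_le_prod (fun j _ => hf0 j) (fun j _ => hfC j)
      _ = C ^ (Fintype.card ι - 1) := by
          rw [prod_const, card_erase_of_mem (mem_univ i), card_univ]
  have hkey : 1 ≤ f i * C ^ (Fintype.card ι - 1) :=
    calc 1 ≤ ∏ j, f j := hprod
      _ = f i * ∏ j ∈ univ.erase i, f j := (mul_prod_erase univ f (mem_univ i)).symm
      _ ≤ f i * C ^ (Fintype.card ι - 1) := mul_le_mul_of_nonneg_left hrest (hf0 i)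
  have hpow : 0 < C ^ (Fintype.card ι - 1) := pos_of_mul_pos_right (one_pos.trans_le hkey) (hf0 i)
  rwa [div_le_iff₀ hpow]

namespace Matrix

variable {n : Type*} [Fintype n] [DecidableEq n]

open scoped ComplexOrder in
theorem PosSemidef.eigenvalues_le_re_trace {𝕜 : Type*} [RCLike 𝕜] {M : Matrix n n 𝕜}
    (hM : M.PosSemidef) (i : n) : hM.1.eigenvalues i ≤ RCLike.re M.trace := by
  rw [hM.1.trace_eq_sum_eigenvalues, map_sum]
  simp only [RCLike.ofReal_re]
  exact single_le_sum (fun j _ => hM.eigenvalues_nonneg j) (mem_univ i)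

theorem PosDef.one_le_det_map_intCast {A : Matrix n n ℤ}
    (hA : (A.map (Int.cast : ℤ → ℝ)).PosDef) : 1 ≤ (A.map (Int.cast : ℤ → ℝ)).det := by
  have hcast : (A.map (Int.cast : ℤ → ℝ)).det = (A.det : ℝ) := ((Int.castRingHom ℝ).map_det A).symm
  have hdet : 0 < A.det := by exact_mod_cast hcast ▸ hA.det_pos
  rw [hcast]
  exact_mod_cast hdet

end Matrix

/-- If `A` is a `K × K` symmetric positive definite matrix with integer entries bounded in
absolute value by `B`, then every eigenvalue (in particular the smallest) of `A` is at least
`1/(K·B)^(K-1)`. -/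
theorem stmt_12 {K : ℕ} (A : Matrix (Fin K) (Fin K) ℤ) (B : ℤ)
    (hB : ∀ i j, |A i j| ≤ B) (hPD : (A.map (Int.cast : ℤ → ℝ)).PosDef) :
    ∀ i, 1 / ((K : ℝ) * B) ^ (K - 1) ≤ hPD.1.eigenvalues i := by
  intro i
  have htrace : (A.map (Int.cast : ℤ → ℝ)).trace ≤ K * B := by
    have hdiag : ∀ k ∈ univ, (A.map (Int.cast : ℤ → ℝ)).diag k ≤ B := fun k _ => by
      simpa using (Int.cast_le (R := ℝ)).mpr ((le_abs_self _).trans (hB k k))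
    exact (sum_le_card_nsmul univ _ _ hdiag).trans_eq (by simp)
  have hprod : 1 ≤ ∏ j, hPD.1.eigenvalues j := by
    simpa [hPD.1.det_eq_prod_eigenvalues] using hPD.one_le_det_map_intCast
  simpa using one_div_pow_card_sub_one_le_of_one_le_prod (fun j => (hPD.eigenvalues_pos j).le)
    (fun j => (hPD.posSemidef.eigenvalues_le_re_trace j).trans (by simpa using htrace)) hprod i
end
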